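/- For positive integers m, n, k and nonnegative integers t₁,…,tₘ: P'(t₁,…,tₘ, k,k,…,k) ≡ P'(t₁,…,tₘ) · P'(k,k,…,k) (mod n), where the block k,…,k has n entries. -/

import Mathlib

/-- Number of generalized derangements of disjoint sets of sizes `t 0, …, t (n-1)`:
permutations of the disjoint union mapping no element into its own set. -/
def gdCount (n : ℕ) (t : Fin n → ℕ) : ℕ :=
  Fintype.card {σ : Equiv.Perm (Σ i : Fin n, Fin (t i)) // ∀ x, (σ x).1 ≠ x.1}

/-- Number of anagrams without fixed letters of the word with `t i` copies of letter `i`: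
letter assignments to positions with the right letter counts and no position keeping
its original letter. -/
def aflCount (n : ℕ) (t : Fin n → ℕ) : ℕ :=
  Fintype.card {w : (Σ i : Fin n, Fin (t i)) → Fin n //
    (∀ j, (Finset.univ.filter fun x => w x = j).card = t j) ∧ ∀ x, w x ≠ x.1}

/-!
Split the letters into the `m` letters of sizes `tᵢ` and the `n` letters of size `k`, the latter
indexed by `Fin n`. Anagrams sending each block of positions to letters of the same block are
pairs of anagrams of the two blocks, which accounts for the product. On all other anagrams the
group `Fin n` acts by translating the letters of the second block together with their positions.
This action is free: an anagram fixed by a nonzero translation puts only first-block letters on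
first-block positions, and counting then forces every second-block letter onto a second-block
position. Hence the other anagrams are counted by a multiple of `n`.
-/

open Finset

section Words

variable {P L : Type*} [Fintype P] [DecidableEq L]

def IsDerangedAnagram (c w : P → L) : Prop :=
  (∀ j, #{x | w x = j} = #{x | c x = j}) ∧ ∀ x, w x ≠ c x

lemma IsDerangedAnagram.card_filter_comp_eq {c w : P → L} (h : IsDerangedAnagram c w)
    (p : L → Prop) [DecidablePred p] : #{x | p (w x)} = #{x | p (c x)} := by
  have hmap : univ.val.map w = univ.val.map c := Multiset.ext.2 fun j => by
    simpa [Multiset.count_map, Finset.card, Finset.filter_val, eq_comm] using h.1 j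
  simpa [Multiset.countP_map, Finset.card, Finset.filter_val] using
    congrArg (Multiset.countP p) hmap

lemma card_filter_equiv {P' : Type*} [Fintype P'] (e : P ≃ P') (q : P' → Prop)
    [DecidablePred q] :
    #{x' | q x'} = #{x | q (e x)} :=
  card_equiv (s := {x' | q x'}) (t := {x | q (e x)}) e.symm (by simp)

variable {P' L' : Type*} [Fintype P'] [DecidableEq L']

lemma isDerangedAnagram_arrowCongr_iff {c : P → L} {c' : P' → L'} (e : P ≃ P') (f : L ≃ L')
    (hc : ∀ x, c' (e x) = f (c x)) {w : P → L} :
    IsDerangedAnagram c' (e.arrowCongr f w) ↔ IsDerangedAnagram c w := by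
  have hfib : ∀ j, #{x' | e.arrowCongr f w x' = f j} = #{x | w x = j} := fun j => by
    simp [card_filter_equiv e]
  have hfib' : ∀ j, #{x' | c' x' = f j} = #{x | c x = j} := fun j => by
    simp [card_filter_equiv e, hc]
  refine and_congr ?_ ?_
  · simp only [← hfib, ← hfib']
    exact f.forall_congr_right.symm
  · rw [← e.forall_congr_right]
    simp [hc]

lemma natCard_isDerangedAnagram_congr {c : P → L} {c' : P' → L'} (e : P ≃ P') (f : L ≃ L')
    (hc : ∀ x, c' (e x) = f (c x)) :
    Nat.card {w // IsDerangedAnagram c w} = Nat.card {w' // IsDerangedAnagram c' w'} :=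
  Nat.card_congr <| (e.arrowCongr f).subtypeEquiv fun _ =>
    (isDerangedAnagram_arrowCongr_iff e f hc).symm

end Words

section Sum

variable {P₁ P₂ L₁ L₂ : Type*}

lemma exists_sumMap_eq_of_isLeft {w : P₁ ⊕ P₂ → L₁ ⊕ L₂}
    (h : ∀ x, (w x).isLeft = x.isLeft) :
    ∃ w₁ w₂, Sum.map w₁ w₂ = w := by
  have h₁ : ∀ x, ∃ y, w (.inl x) = .inl y := fun x => Sum.isLeft_iff.mp (h (.inl x))
  have h₂ : ∀ x, ∃ y, w (.inr x) = .inr y := fun x =>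
    Sum.isRight_iff.mp (by simpa using h (.inr x))
  choose w₁ hw₁ using h₁
  choose w₂ hw₂ using h₂
  exact ⟨w₁, w₂, funext <| by rintro (x | x) <;> simp [hw₁, hw₂]⟩

variable [Fintype P₁] [Fintype P₂] [DecidableEq L₁] [DecidableEq L₂]
  {c₁ : P₁ → L₁} {c₂ : P₂ → L₂}

lemma isDerangedAnagram_sumMap_iff {w₁ : P₁ → L₁} {w₂ : P₂ → L₂} :
    IsDerangedAnagram (Sum.map c₁ c₂) (Sum.map w₁ w₂) ↔
      IsDerangedAnagram c₁ w₁ ∧ IsDerangedAnagram c₂ w₂ := by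
  simp only [IsDerangedAnagram, card_filter, Fintype.sum_sum_type, Sum.forall]
  simp [and_and_and_comm]

lemma natCard_isDerangedAnagram_sumMap [Finite L₁] [Finite L₂] :
    Nat.card {w // IsDerangedAnagram (Sum.map c₁ c₂) w} =
      Nat.card {w // IsDerangedAnagram c₁ w} * Nat.card {w // IsDerangedAnagram c₂ w} +
      Nat.card {w // IsDerangedAnagram (Sum.map c₁ c₂) w ∧
        ¬ ∃ w₁ w₂, Sum.map w₁ w₂ = w} := by
  classical
  set D := fun w => IsDerangedAnagram (Sum.map c₁ c₂) w
  set S := fun w : P₁ ⊕ P₂ → L₁ ⊕ L₂ => ∃ w₁ w₂, Sum.map w₁ w₂ = w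
  have hsplit :
      Nat.card {w // D w} = Nat.card {w // D w ∧ S w} + Nat.card {w // D w ∧ ¬ S w} := by
    rw [← Nat.card_sum]
    exact Nat.card_congr <| (Equiv.sumCompl fun w : {w // D w} => S w.1).symm.trans <|
      .sumCongr (Equiv.subtypeSubtypeEquivSubtypeInter D S)
        (Equiv.subtypeSubtypeEquivSubtypeInter D (¬ S ·))
  have hprod : {w // IsDerangedAnagram c₁ w} × {w // IsDerangedAnagram c₂ w} ≃
      {w // D w ∧ S w} := by
    refine Equiv.subtypeProdEquivProd.symm.trans <| .ofBijective
      (fun p => ⟨Sum.map p.1.1 p.1.2, isDerangedAnagram_sumMap_iff.2 p.2, _, _, rfl⟩)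
      ⟨?_, ?_⟩
    · rintro ⟨⟨u₁, u₂⟩, _⟩ ⟨⟨v₁, v₂⟩, _⟩ h
      have h' := congrArg Subtype.val h
      obtain ⟨rfl, rfl⟩ : u₁ = v₁ ∧ u₂ = v₂ :=
        ⟨funext fun x => by simpa using congrFun h' (.inl x),
          funext fun x => by simpa using congrFun h' (.inr x)⟩
      rfl
    · rintro ⟨_, hD, w₁, w₂, rfl⟩
      exact ⟨⟨(w₁, w₂), isDerangedAnagram_sumMap_iff.1 hD⟩, rfl⟩
  rw [hsplit, ← Nat.card_congr hprod, Nat.card_prod]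

lemma IsDerangedAnagram.isLeft_eq_of_forall_isLeft_inl {w : P₁ ⊕ P₂ → L₁ ⊕ L₂}
    (hw : IsDerangedAnagram (Sum.map c₁ c₂) w) (hl : ∀ x, (w (.inl x)).isLeft) :
    ∀ x, (w x).isLeft = x.isLeft := by
  have hsub : ({x | (w x).isRight} : Finset (P₁ ⊕ P₂)) ⊆ ({x | x.isRight} : Finset _) := by
    rintro (x | x) <;> simp [hl]
  have hcard : #{x | (w x).isRight} = #{x : P₁ ⊕ P₂ | x.isRight} := by
    simpa using hw.card_filter_comp_eq (fun j => j.isRight)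
  have heq := eq_of_subset_of_card_le hsub hcard.ge
  rintro (x | x)
  · simpa using hl x
  · have : Sum.inr x ∈ ({x | (w x).isRight} : Finset (P₁ ⊕ P₂)) := by simp [heq]
    simpa using this

end Sum

theorem AddAction.natCard_dvd_natCard_of_free {G X : Type*} [AddGroup G] [AddAction G X]
    (h : ∀ (g : G) (x : X), g +ᵥ x = x → g = 0) : Nat.card G ∣ Nat.card X := by
  have hstab (x : X) : AddAction.stabilizer G x = ⊥ :=
    (AddSubgroup.eq_bot_iff_forall _).2 fun g hg => h g x hg
  rw [Nat.card_congr (AddAction.selfEquivOrbitsQuotientProd hstab), Nat.card_prod]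
  exact dvd_mul_left _ _

section Action

variable {G P₁ P₂ L₁ L₂ : Type*} [AddGroup G] [AddAction G P₂] [AddAction G L₂]

def inrVAddPerm (α : Type*) (g : G) : Equiv.Perm (α ⊕ P₂) where
  toFun := Sum.map id (g +ᵥ ·)
  invFun := Sum.map id (-g +ᵥ ·)
  left_inv := by rintro (x | x) <;> simp
  right_inv := by rintro (x | x) <;> simp

variable (P₁ L₁) in
abbrev sumWordAddAction : AddAction G (P₁ ⊕ P₂ → L₁ ⊕ L₂) where
  vadd g := (inrVAddPerm P₁ g).arrowCongr (inrVAddPerm L₁ g)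
  zero_vadd w := by
    change (inrVAddPerm P₁ (0 : G)).arrowCongr (inrVAddPerm L₁ (0 : G)) w = w
    ext (x | x) <;> simp [inrVAddPerm, ← Function.id_def]
  add_vadd g h w := by
    change (inrVAddPerm P₁ (g + h)).arrowCongr (inrVAddPerm L₁ (g + h)) w =
      (inrVAddPerm P₁ g).arrowCongr (inrVAddPerm L₁ g)
        ((inrVAddPerm P₁ h).arrowCongr (inrVAddPerm L₁ h) w)
    ext (x | x) <;> simp [inrVAddPerm, add_vadd, Sum.map_map, Function.comp_def]

attribute [local instance] sumWordAddAction

lemma vadd_sumMap (g : G) (w₁ : P₁ → L₁) (w₂ : P₂ → L₂) :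
    g +ᵥ Sum.map w₁ w₂ = Sum.map w₁ fun x => g +ᵥ w₂ (-g +ᵥ x) := by
  funext x
  rcases x with x | x <;> rfl

lemma sumWord_vadd_inl (g : G) (w : P₁ ⊕ P₂ → L₁ ⊕ L₂) (x : P₁) :
    (g +ᵥ w) (.inl x) = Sum.map id (g +ᵥ ·) (w (.inl x)) := rfl

variable [Fintype P₁] [Fintype P₂] [DecidableEq L₁] [DecidableEq L₂]
  {c₁ : P₁ → L₁} {c₂ : P₂ → L₂}

lemma isDerangedAnagram_vadd_iff (hc : ∀ (g : G) x, c₂ (g +ᵥ x) = g +ᵥ c₂ x) (g : G)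
    (w : P₁ ⊕ P₂ → L₁ ⊕ L₂) :
    IsDerangedAnagram (Sum.map c₁ c₂) (g +ᵥ w) ↔ IsDerangedAnagram (Sum.map c₁ c₂) w :=
  isDerangedAnagram_arrowCongr_iff _ _ <| by rintro (x | x) <;> simp [inrVAddPerm, hc]

lemma exists_sumMap_eq_of_vadd_eq_self [IsCancelVAdd G L₂] {g : G}
    {w : P₁ ⊕ P₂ → L₁ ⊕ L₂}
    (hw : IsDerangedAnagram (Sum.map c₁ c₂) w) (hg : g ≠ 0) (hfix : g +ᵥ w = w) :
    ∃ w₁ w₂, Sum.map w₁ w₂ = w := by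
  refine exists_sumMap_eq_of_isLeft <| hw.isLeft_eq_of_forall_isLeft_inl fun x => ?_
  have hx := congrFun hfix (.inl x)
  rw [sumWord_vadd_inl] at hx
  rcases hwx : w (.inl x) with y | b
  · rfl
  · rw [hwx, Sum.map_inr, Sum.inr.injEq] at hx
    exact absurd (IsCancelVAdd.eq_zero_of_vadd hx) hg

def derangedAnagramsNotSumMap (hc : ∀ (g : G) x, c₂ (g +ᵥ x) = g +ᵥ c₂ x) :
    SubAddAction G (P₁ ⊕ P₂ → L₁ ⊕ L₂) where
  carrier := {w | IsDerangedAnagram (Sum.map c₁ c₂) w ∧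
    ¬ ∃ w₁ w₂, Sum.map w₁ w₂ = w}
  vadd_mem' g w hw := by
    refine ⟨(isDerangedAnagram_vadd_iff hc g w).2 hw.1, fun ⟨w₁, w₂, h⟩ => hw.2 ?_⟩
    refine ⟨w₁, fun x => -g +ᵥ w₂ (- -g +ᵥ x), ?_⟩
    rw [← vadd_sumMap, h, neg_vadd_vadd]

theorem natCard_isDerangedAnagram_sumMap_modEq [Finite L₁] [Finite L₂] [IsCancelVAdd G L₂]
    (hc : ∀ (g : G) x, c₂ (g +ᵥ x) = g +ᵥ c₂ x) :
    Nat.card {w // IsDerangedAnagram (Sum.map c₁ c₂) w} ≡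
      Nat.card {w // IsDerangedAnagram c₁ w} * Nat.card {w // IsDerangedAnagram c₂ w}
        [MOD Nat.card G] := by
  have hdvd : Nat.card G ∣ Nat.card (derangedAnagramsNotSumMap (c₁ := c₁) hc) :=
    AddAction.natCard_dvd_natCard_of_free fun g ⟨w, hw⟩ hfix => by
      by_contra hg
      exact hw.2 (exists_sumMap_eq_of_vadd_eq_self hw.1 hg (congrArg Subtype.val hfix))
  rw [natCard_isDerangedAnagram_sumMap]
  exact (Nat.modEq_zero_iff_dvd.2 hdvd).add_left _

end Action

lemma card_filter_sigma_fst_eq {ι : Type*} [Fintype ι] [DecidableEq ι] (t : ι → ℕ)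
    (j : ι) :
    #{x : Σ i, Fin (t i) | x.1 = j} = t j := by
  rw [← Fintype.card_subtype, Fintype.card_congr (Equiv.sigmaSubtype j), Fintype.card_fin]

lemma aflCount_eq_natCard (N : ℕ) (t : Fin N → ℕ) :
    aflCount N t =
      Nat.card {w // IsDerangedAnagram (Sigma.fst : (Σ i, Fin (t i)) → Fin N) w} := by
  simp only [aflCount, IsDerangedAnagram, card_filter_sigma_fst_eq, Nat.card_eq_fintype_card]

lemma aflCount_append {m n : ℕ} (t : Fin m → ℕ) (s : Fin n → ℕ) :
    aflCount (m + n) (Fin.append t s) =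
      Nat.card {w // IsDerangedAnagram (Sum.map (Sigma.fst : (Σ i, Fin (t i)) → Fin m)
        (Sigma.fst : (Σ i, Fin (s i)) → Fin n)) w} := by
  rw [aflCount_eq_natCard, ← natCard_isDerangedAnagram_congr
    (c := (Sigma.fst : (Σ i, Fin (Sum.elim t s i)) → _))
    (Equiv.sigmaCongr finSumFinEquiv fun a => finCongr (congrFun Fin.append_comp_sumElim a).symm)
    finSumFinEquiv fun _ => rfl]
  exact natCard_isDerangedAnagram_congr (Equiv.sumSigmaDistrib _) (Equiv.refl _)
    (by rintro ⟨i | i, a⟩ <;> rfl)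

abbrev sigmaFstAddAction (G α β : Type*) [AddGroup G] [AddAction G α] :
    AddAction G (Σ _ : α, β) where
  vadd g p := ⟨g +ᵥ p.1, p.2⟩
  zero_vadd p := Sigma.ext (zero_vadd G p.1) HEq.rfl
  add_vadd g h p := Sigma.ext (add_vadd g h p.1) HEq.rfl

theorem afl_block_congruence_general (m n k : ℕ) (hn : 1 ≤ n)
    (t : Fin m → ℕ) :
    aflCount (m + n) (Fin.append t (fun _ : Fin n => k)) ≡
      aflCount m t * aflCount n (fun _ => k) [MOD n] := by
  have : NeZero n := ⟨by omega⟩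
  let := sigmaFstAddAction (Fin n) (Fin n) (Fin k)
  have key := natCard_isDerangedAnagram_sumMap_modEq (G := Fin n)
    (c₁ := (Sigma.fst : (Σ i : Fin m, Fin (t i)) → Fin m))
    (c₂ := (Sigma.fst : (Σ _ : Fin n, Fin k) → Fin n)) fun _ _ => rfl
  rwa [Nat.card_fin, ← aflCount_append, ← aflCount_eq_natCard, ← aflCount_eq_natCard] at key

theorem afl_block_congruence (m n k : ℕ) (hm : 1 ≤ m) (hn : 1 ≤ n) (hk : 1 ≤ k)
    (t : Fin m → ℕ) :
    aflCount (m + n) (Fin.append t (fun _ : Fin n => k)) ≡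
      aflCount m t * aflCount n (fun _ => k) [MOD n] :=
  afl_block_congruence_general m n k hn t
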